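/- arXiv:1906.01097 — 4 statements merged into one kernel-verified Lean document; each statement's English description precedes it below -/
import Mathlib

section
/- For every real X ≥ 1, log(X) + γ − 2/(3X) ≤ ∑_{n ≤ X} 1/n ≤ log(X) + γ + 1/(2X), where γ is the Euler–Mascheroni constant. -/
/-!
Both bounds come from monotone sequences converging to `γ`. Comparing `log (1 + 1 / a)` with the
trapezoid rule (`log u ≤ sinh (log u)`) and with the first term of its series in `1 / (2a + 1)`
shows that `H_n - log n - 1 / (2n)` increases and `H_n - log (n + 1) + 1 / (2n + 1)` decreases,
so `γ` lies between them. For `n = ⌊X⌋` one then passes from `n` to `X` using that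
`log x + 1 / (2x)` is increasing on `[1/2, ∞)` and that `1 / (2n + 1) ≤ 2 / (3(n + 1))` for `n ≥ 1`.
-/

open Real Filter Topology

namespace Real

lemma log_le_sub_inv_div_two {u : ℝ} (hu : 1 ≤ u) : log u ≤ (u - u⁻¹) / 2 := by
  have h := self_le_sinh_iff.2 (log_nonneg hu)
  rwa [sinh_log (by linarith)] at h

lemma log_one_add_inv_le {a : ℝ} (ha : 0 < a) :
    log (1 + a⁻¹) ≤ (a⁻¹ + (a + 1)⁻¹) / 2 := by
  convert log_le_sub_inv_div_two (u := 1 + a⁻¹) (by simp [ha.le]) using 2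
  field_simp
  ring

lemma two_div_two_mul_add_one_le_log_one_add_inv {a : ℝ} (ha : 0 < a) :
    2 / (2 * a + 1) ≤ log (1 + a⁻¹) := by
  refine le_trans (le_of_eq ?_) (le_hasSum (hasSum_log_one_add_inv ha) 0 fun k _ ↦ by positivity)
  norm_num [div_eq_mul_inv]

lemma log_add_one_sub_log {a : ℝ} (ha : 0 < a) : log (a + 1) - log a = log (1 + a⁻¹) := by
  rw [← log_div (by positivity) ha.ne']
  congr 1
  field_simp

lemma monotoneOn_log_add_one_div_two_mul :
    MonotoneOn (fun x : ℝ ↦ log x + 1 / (2 * x)) (Set.Ici (1 / 2)) := by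
  intro x hx y hy hxy
  simp only [Set.mem_Ici] at hx hy
  have hlog : 1 - x / y ≤ log y - log x := by
    have h := log_le_sub_one_of_pos (x := x / y) (by positivity)
    rw [log_div (by positivity) (by positivity)] at h
    linarith
  have hfrac : 1 / (2 * x) - 1 / (2 * y) ≤ 1 - x / y := by
    rw [div_sub_div _ _ (by positivity) (by positivity), one_sub_div (by positivity),
      div_le_div_iff₀ (by positivity) (by positivity)]
    nlinarith [mul_nonneg (sub_nonneg.2 hxy) (sub_nonneg.2 hx)]
  dsimp only
  linarith

end Real

lemma monotone_harmonic_sub_log_sub_one_div :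
    Monotone fun n : ℕ ↦ (harmonic n : ℝ) - log n - 1 / (2 * n) := by
  refine monotone_nat_of_le_succ fun n ↦ ?_
  rcases Nat.eq_zero_or_pos n with rfl | hn
  · norm_num
  have hn0 : (0 : ℝ) < n := by exact_mod_cast hn
  have h := log_one_add_inv_le hn0
  rw [← log_add_one_sub_log hn0] at h
  have hcorr : 1 / (2 * (n : ℝ)) - 1 / (2 * (n + 1)) = ((n : ℝ)⁻¹ - ((n : ℝ) + 1)⁻¹) / 2 := by
    field_simp
  push_cast [harmonic_succ]
  linarith

lemma antitone_harmonic_sub_log_add_one_add_one_div :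
    Antitone fun n : ℕ ↦ (harmonic n : ℝ) - log (n + 1) + 1 / (2 * n + 1) := by
  refine antitone_nat_of_succ_le fun n ↦ ?_
  have hn1 : (0 : ℝ) < n + 1 := by positivity
  have h := two_div_two_mul_add_one_le_log_one_add_inv hn1
  rw [← log_add_one_sub_log hn1] at h
  have hconvex :
      ((n : ℝ) + 1)⁻¹ + 1 / (2 * (n + 1) + 1) ≤ 1 / (2 * n + 1) + 2 / (2 * (n + 1) + 1) := by
    rw [inv_eq_one_div, div_add_div _ _ (by positivity) (by positivity),
      div_add_div _ _ (by positivity) (by positivity),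
      div_le_div_iff₀ (by positivity) (by positivity)]
    nlinarith
  push_cast [harmonic_succ]
  linarith

lemma tendsto_harmonic_sub_log_sub_one_div :
    Tendsto (fun n : ℕ ↦ (harmonic n : ℝ) - log n - 1 / (2 * n)) atTop
      (𝓝 eulerMascheroniConstant) := by
  have h : Tendsto (fun n : ℕ ↦ 1 / (2 * (n : ℝ))) atTop (𝓝 0) := by
    simpa [mul_comm] using tendsto_one_div_atTop_nhds_zero_nat.const_mul (1 / 2 : ℝ)
  simpa using tendsto_harmonic_sub_log.sub h

lemma tendsto_harmonic_sub_log_add_one_add_one_div :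
    Tendsto (fun n : ℕ ↦ (harmonic n : ℝ) - log (n + 1) + 1 / (2 * n + 1)) atTop
      (𝓝 eulerMascheroniConstant) := by
  have h : Tendsto (fun n : ℕ ↦ 1 / (2 * (n : ℝ) + 1)) atTop (𝓝 0) := by
    simp only [one_div]
    exact tendsto_inv_atTop_zero.comp <| tendsto_atTop_add_const_right _ 1 <|
      tendsto_natCast_atTop_atTop.const_mul_atTop two_pos
  simpa using tendsto_harmonic_sub_log_add_one.add h

lemma harmonic_le_log_add_eulerMascheroniConstant_add (n : ℕ) :
    (harmonic n : ℝ) ≤ log n + eulerMascheroniConstant + 1 / (2 * n) := by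
  have := monotone_harmonic_sub_log_sub_one_div.ge_of_tendsto
    tendsto_harmonic_sub_log_sub_one_div n
  linarith

lemma log_add_one_add_eulerMascheroniConstant_sub_le_harmonic (n : ℕ) :
    log (n + 1) + eulerMascheroniConstant - 1 / (2 * n + 1) ≤ harmonic n := by
  have := antitone_harmonic_sub_log_add_one_add_one_div.le_of_tendsto
    tendsto_harmonic_sub_log_add_one_add_one_div n
  linarith

open Real in
theorem harmonic_sum_bounds (X : ℝ) (hX : 1 ≤ X) :
    Real.log X + Real.eulerMascheroniConstant - 2 / (3 * X) ≤
      ∑ n ∈ Finset.Icc 1 ⌊X⌋₊, (1 : ℝ) / n ∧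
    ∑ n ∈ Finset.Icc 1 ⌊X⌋₊, (1 : ℝ) / n ≤
      Real.log X + Real.eulerMascheroniConstant + 1 / (2 * X) := by
  have hsum : ∑ n ∈ Finset.Icc 1 ⌊X⌋₊, (1 : ℝ) / n = harmonic ⌊X⌋₊ := by
    simp [harmonic_eq_sum_Icc]
  set n := ⌊X⌋₊
  have hn : (1 : ℝ) ≤ n := by exact_mod_cast (Nat.one_le_floor_iff X).2 hX
  have hnX : (n : ℝ) ≤ X := Nat.floor_le (by linarith)
  have hXn : X < n + 1 := Nat.lt_floor_add_one X
  rw [hsum]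
  constructor
  · have hlog : log X ≤ log (n + 1) := log_le_log (by linarith) hXn.le
    have hinv : 1 / (2 * (n : ℝ) + 1) ≤ 2 / (3 * X) := by
      rw [div_le_div_iff₀ (by positivity) (by positivity)]
      linarith
    linarith [log_add_one_add_eulerMascheroniConstant_sub_le_harmonic n]
  · have := monotoneOn_log_add_one_div_two_mul
      (Set.mem_Ici.2 (by linarith)) (Set.mem_Ici.2 (by linarith)) hnX
    dsimp only at this
    linarith [harmonic_le_log_add_eulerMascheroniConstant_add n]
end

section
/- For every s ∈ ℂ with |arg(s)| ≤ π − θ where 0 < θ < π, one has Γ(s) = √(2π)·s^{s−1/2}·e^{−s}·e^{μ(s)} with |μ(s)| ≤ F_θ/|s|, where F_θ = 1/(12 sin²(θ/2)). -/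
/-!
Let `g(w) = (w + 1/2) (log(w + 1) - log w) - 1` and let `μ(s) = ∑ₙ g(s + n)` be Binet's function,
so that `g(w) = μ(w) - μ(w + 1)`. The partial sums of this series telescope against Gauss's
product `GammaSeq s N → Γ(s)`, and Stirling's formula for `N!` turns the limit into `exp μ(s) = Γ(s) eˢ s^(1/2 - s) / √(2π)`. For the bound, `g(w)` is the integral of
`t(1 - t) / (2 (w + t)²)` over `[0, 1]`, and in the sector `|w + t| ≥ (|w| + t) sin(θ/2)`, so
`|g(s + n)| ≤ g(|s| + n) / sin²(θ/2)`. For real `b > 0` the series of `log(1 + 1/b)` in powers of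
`1/(2b + 1)` gives `g(b) ≤ (1/b - 1/(b + 1)) / 12`, and these bounds telescope to `1 / (12 |s|)`.
-/

open Complex Filter Topology Finset
open scoped Nat

noncomputable def binetIncrement (w : ℂ) : ℂ :=
  (w + 1 / 2) * (log (w + 1) - log w) - 1

lemma Complex.add_ofReal_mem_slitPlane {z : ℂ} (hz : z ∈ slitPlane) {r : ℝ} (hr : 0 ≤ r) :
    z + r ∈ slitPlane := by
  rw [mem_slitPlane_iff] at hz ⊢
  simp only [add_re, ofReal_re, add_im, ofReal_im, add_zero]
  exact hz.imp (fun h => by linarith) id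

lemma mul_sin_half_le_norm_add_ofReal {θ : ℝ} (hθ : 0 ≤ θ) {s : ℂ}
    (hs : |s.arg| ≤ Real.pi - θ) {r : ℝ} (hr : 0 ≤ r) :
    (‖s‖ + r) * Real.sin (θ / 2) ≤ ‖s + r‖ := by
  have hcos : -Real.cos θ ≤ Real.cos s.arg := by
    rw [← Real.cos_pi_sub, ← Real.cos_abs s.arg]
    exact Real.cos_le_cos_of_nonneg_of_le_pi (abs_nonneg _) (by linarith) hs
  have hre : -‖s‖ * Real.cos θ ≤ s.re := by
    rw [← norm_mul_cos_arg]
    nlinarith [norm_nonneg s]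
  have hsin : Real.sin (θ / 2) ^ 2 = (1 - Real.cos θ) / 2 := by
    have := Real.cos_sq (θ / 2)
    rw [mul_div_cancel₀ θ two_ne_zero] at this
    linarith [Real.sin_sq_add_cos_sq (θ / 2)]
  have hnorm : ‖s + r‖ ^ 2 = ‖s‖ ^ 2 + 2 * r * s.re + r ^ 2 := by
    simp only [Complex.sq_norm, normSq_apply, add_re, add_im, ofReal_re, ofReal_im, add_zero]
    ring
  apply le_of_pow_le_pow_left₀ two_ne_zero (norm_nonneg _)
  rw [mul_pow, hsin, hnorm]
  -- the difference of the two sides is `(‖s‖ - r) ^ 2 * (1 + cos θ) / 2`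
  nlinarith [mul_nonneg (sq_nonneg (‖s‖ - r))
      (by linarith [Real.neg_one_le_cos θ] : 0 ≤ 1 + Real.cos θ),
    mul_le_mul_of_nonneg_left hre (by linarith : 0 ≤ 2 * r)]

lemma binetIncrement_eq_integral {w : ℂ} (hw : ∀ t ∈ Set.Icc (0 : ℝ) 1, w + t ∈ slitPlane) :
    binetIncrement w = ∫ t in (0 : ℝ)..1, ((t * (1 - t) / 2 : ℝ) : ℂ) / (w + t) ^ 2 := by
  have hw0 : ∀ t ∈ Set.Icc (0 : ℝ) 1, w + t ≠ 0 := fun t ht => slitPlane_ne_zero (hw t ht)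
  set F : ℂ → ℂ := fun z => (-z + (1 + 2 * w) * log (w + z) + (w + w ^ 2) * (w + z)⁻¹) / 2
  have hF : ∀ t ∈ Set.uIcc (0 : ℝ) 1,
      HasDerivAt (fun t : ℝ => F t) (((t * (1 - t) / 2 : ℝ) : ℂ) / (w + t) ^ 2) t := by
    intro t ht
    rw [Set.uIcc_of_le zero_le_one] at ht
    have hlin : HasDerivAt (fun z : ℂ => w + z) 1 t := (hasDerivAt_id _).const_add w
    have hderiv : HasDerivAt F
        ((-1 + (1 + 2 * w) * (1 / (w + t)) + (w + w ^ 2) * (-1 / (w + t) ^ 2)) / 2) t :=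
      (((hasDerivAt_id (t : ℂ)).neg.add ((hlin.clog (hw t ht)).const_mul (1 + 2 * w))).add
        ((hlin.inv (hw0 t ht)).const_mul (w + w ^ 2))).div_const 2
    convert hderiv.comp_ofReal using 1
    have := hw0 t ht
    push_cast
    field_simp
    ring
  have hint : IntervalIntegrable (fun t : ℝ => ((t * (1 - t) / 2 : ℝ) : ℂ) / (w + t) ^ 2)
      MeasureTheory.volume 0 1 := by
    refine ContinuousOn.intervalIntegrable (ContinuousOn.div (by fun_prop) (by fun_prop) ?_)
    rw [Set.uIcc_of_le zero_le_one]
    exact fun t ht => pow_ne_zero 2 (hw0 t ht)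
  have h0 : w ≠ 0 := by simpa using hw0 0 (by simp)
  have h1 : w + 1 ≠ 0 := by simpa using hw0 1 (by simp)
  rw [intervalIntegral.integral_eq_sub_of_hasDerivAt hF hint, binetIncrement]
  simp only [F, ofReal_zero, ofReal_one, add_zero, neg_zero]
  field_simp
  ring

lemma real_binetIncrement_eq_integral {b : ℝ} (hb : 0 < b) :
    (b + 1 / 2) * (Real.log (b + 1) - Real.log b) - 1
      = ∫ t in (0 : ℝ)..1, t * (1 - t) / 2 / (b + t) ^ 2 := by
  apply ofReal_injective
  have hw : ∀ t ∈ Set.Icc (0 : ℝ) 1, (b : ℂ) + t ∈ slitPlane := fun t ht => by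
    rw [← ofReal_add]
    exact ofReal_mem_slitPlane.2 (by linarith [ht.1])
  have h := binetIncrement_eq_integral hw
  rw [binetIncrement, ← ofReal_one, ← ofReal_add, ← ofReal_log hb.le,
    ← ofReal_log (by linarith)] at h
  push_cast at h ⊢
  rw [h, ← intervalIntegral.integral_ofReal]
  push_cast
  rfl

lemma real_binetIncrement_le {b : ℝ} (hb : 0 < b) :
    (b + 1 / 2) * (Real.log (b + 1) - Real.log b) - 1 ≤ (1 / b - 1 / (b + 1)) / 12 := by
  set x : ℝ := 1 / (2 * b + 1) with hx
  have hx0 : 0 < x := by positivity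
  have hx1 : x ^ 2 < 1 := by
    have : x < 1 := by rw [hx, div_lt_one (by linarith)]; linarith
    nlinarith
  -- with `x = 1 / (2b + 1)` the left side is `∑_{k ≥ 1} x ^ (2k) / (2k + 1)`
  have hlog : HasSum (fun k : ℕ => 1 / (2 * k + 1) * (x ^ 2) ^ k)
      ((b + 1 / 2) * (Real.log (b + 1) - Real.log b)) := by
    have h := (Real.hasSum_log_one_add_inv hb).mul_left (b + 1 / 2)
    rw [show 1 + b⁻¹ = (b + 1) / b by field_simp, Real.log_div (by linarith) hb.ne'] at h
    refine h.congr_fun fun k => ?_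
    rw [hx, pow_succ _ (2 * k), pow_mul]
    field_simp
  have htail : HasSum (fun k : ℕ => 1 / (2 * (k + 1 : ℕ) + 1) * (x ^ 2) ^ (k + 1))
      ((b + 1 / 2) * (Real.log (b + 1) - Real.log b) - 1) := by
    simpa using (hasSum_nat_add_iff' 1).mpr hlog
  have hgeom : HasSum (fun k : ℕ => 1 / 3 * (x ^ 2) ^ (k + 1)) (1 / 3 * (x ^ 2 / (1 - x ^ 2))) := by
    have := (hasSum_geometric_of_lt_one (by positivity) hx1).mul_left (x ^ 2)
    simp only [← pow_succ'] at this
    exact this.mul_left _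
  calc (b + 1 / 2) * (Real.log (b + 1) - Real.log b) - 1
      ≤ 1 / 3 * (x ^ 2 / (1 - x ^ 2)) := by
        refine hasSum_le (fun k => ?_) htail hgeom
        gcongr
        push_cast
        linarith [k.cast_nonneg (α := ℝ)]
    _ = (1 / b - 1 / (b + 1)) / 12 := by
        have h : 1 - x ^ 2 = 4 * b * (b + 1) * x ^ 2 := by
          rw [hx]
          field_simp
          ring
        rw [h]
        field_simp
        ring

lemma norm_binetIncrement_le {w : ℂ} {b c : ℝ} (hb : 0 < b) (hc : 0 < c)
    (hw : ∀ t ∈ Set.Icc (0 : ℝ) 1, w + t ∈ slitPlane)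
    (hwb : ∀ t ∈ Set.Icc (0 : ℝ) 1, c * (b + t) ≤ ‖w + t‖) :
    ‖binetIncrement w‖ ≤ 1 / (12 * c ^ 2) / b - 1 / (12 * c ^ 2) / (b + 1) := by
  have hpoint : ∀ t ∈ Set.Ioc (0 : ℝ) 1,
      ‖((t * (1 - t) / 2 : ℝ) : ℂ) / (w + t) ^ 2‖ ≤ t * (1 - t) / 2 / (b + t) ^ 2 / c ^ 2 := by
    intro t ht
    have hnum : 0 ≤ t * (1 - t) / 2 := by nlinarith [ht.1, ht.2]
    have hbt : 0 < c * (b + t) := mul_pos hc (by linarith [ht.1])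
    calc ‖((t * (1 - t) / 2 : ℝ) : ℂ) / (w + t) ^ 2‖ = t * (1 - t) / 2 / ‖w + t‖ ^ 2 := by
          rw [norm_div, norm_pow, norm_real, Real.norm_of_nonneg hnum]
      _ ≤ t * (1 - t) / 2 / (c * (b + t)) ^ 2 := by
          gcongr
          exact hwb t (Set.Ioc_subset_Icc_self ht)
      _ = t * (1 - t) / 2 / (b + t) ^ 2 / c ^ 2 := by field_simp
  have hint : IntervalIntegrable (fun t : ℝ => t * (1 - t) / 2 / (b + t) ^ 2 / c ^ 2)
      MeasureTheory.volume 0 1 := by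
    refine ContinuousOn.intervalIntegrable (ContinuousOn.div_const
      (ContinuousOn.div (by fun_prop) (by fun_prop) ?_) _)
    rw [Set.uIcc_of_le zero_le_one]
    exact fun t ht => pow_ne_zero 2 (by linarith [ht.1])
  calc ‖binetIncrement w‖
      ≤ ∫ t in (0 : ℝ)..1, t * (1 - t) / 2 / (b + t) ^ 2 / c ^ 2 := by
        rw [binetIncrement_eq_integral hw]
        exact intervalIntegral.norm_integral_le_of_norm_le zero_le_one
          (Filter.Eventually.of_forall hpoint) hint
    _ = ((b + 1 / 2) * (Real.log (b + 1) - Real.log b) - 1) / c ^ 2 := by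
        rw [intervalIntegral.integral_div, real_binetIncrement_eq_integral hb]
    _ ≤ (1 / b - 1 / (b + 1)) / 12 / c ^ 2 := by
        gcongr
        exact real_binetIncrement_le hb
    _ = 1 / (12 * c ^ 2) / b - 1 / (12 * c ^ 2) / (b + 1) := by ring

lemma mem_slitPlane_of_abs_arg_le {θ : ℝ} (hθ : 0 < θ) {s : ℂ} (hs0 : s ≠ 0)
    (hs : |s.arg| ≤ Real.pi - θ) : s ∈ slitPlane :=
  mem_slitPlane_iff_arg.2 ⟨fun h => by rw [h, abs_of_pos Real.pi_pos] at hs; linarith, hs0⟩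

lemma norm_binetIncrement_add_natCast_le {θ : ℝ} (hθ : 0 < θ) {s : ℂ} (hs0 : s ≠ 0)
    (hs : |s.arg| ≤ Real.pi - θ) (n : ℕ) :
    ‖binetIncrement (s + n)‖ ≤ 1 / (12 * Real.sin (θ / 2) ^ 2) / (‖s‖ + n)
      - 1 / (12 * Real.sin (θ / 2) ^ 2) / (‖s‖ + (n + 1 : ℕ)) := by
  have hsin : 0 < Real.sin (θ / 2) :=
    Real.sin_pos_of_pos_of_lt_pi (by linarith) (by linarith [abs_nonneg s.arg])
  rw [Nat.cast_succ, ← add_assoc]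
  refine norm_binetIncrement_le (b := ‖s‖ + n) (by positivity) hsin (fun t ht => ?_)
    (fun t ht => ?_)
  · simpa [add_assoc] using
      add_ofReal_mem_slitPlane (mem_slitPlane_of_abs_arg_le hθ hs0 hs) (r := n + t)
        (by linarith [ht.1])
  · simpa [add_assoc, mul_comm] using
      mul_sin_half_le_norm_add_ofReal hθ.le hs (r := n + t) (by linarith [ht.1])

lemma summable_and_norm_tsum_le_of_norm_le_sub {E : Type*} [NormedAddCommGroup E]
    [CompleteSpace E] {f : ℕ → E} {u : ℕ → ℝ} (hu : ∀ n, 0 ≤ u n)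
    (hf : ∀ n, ‖f n‖ ≤ u n - u (n + 1)) :
    Summable f ∧ ‖∑' n, f n‖ ≤ u 0 := by
  have hpartial : ∀ N, ∑ n ∈ range N, ‖f n‖ ≤ u 0 := fun N =>
    calc ∑ n ∈ range N, ‖f n‖ ≤ ∑ n ∈ range N, (u n - u (n + 1)) := sum_le_sum fun n _ => hf n
      _ = u 0 - u N := sum_range_sub' u N
      _ ≤ u 0 := by linarith [hu N]
  have hsum : Summable (‖f ·‖) := summable_of_sum_range_le (fun _ => norm_nonneg _) hpartial
  exact ⟨hsum.of_norm, (norm_tsum_le_tsum_norm hsum).trans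
    (Real.tsum_le_of_sum_range_le (fun _ => norm_nonneg _) hpartial)⟩

lemma sum_range_binetIncrement (s : ℂ) (N : ℕ) :
    ∑ n ∈ range N, binetIncrement (s + n)
      = (s + N + 1 / 2) * log (s + N) - (s - 1 / 2) * log s
        - ∑ n ∈ range (N + 1), log (s + n) - N := by
  induction N with
  | zero => simp; ring
  | succ N ih =>
    rw [sum_range_succ, ih, sum_range_succ _ (N + 1), binetIncrement]
    simp only [Nat.cast_succ, ← add_assoc]
    ring

lemma tendsto_one_add_div_natCast (s : ℂ) : Tendsto (fun N : ℕ => 1 + s / N) atTop (𝓝 1) := by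
  simpa using tendsto_const_nhds.add (tendsto_const_div_atTop_nhds_zero_nat s)

lemma tendsto_add_half_mul_log_one_add_div (s : ℂ) :
    Tendsto (fun N : ℕ => (s + N + 1 / 2) * log (1 + s / N)) atTop (𝓝 s) := by
  have hmain : Tendsto (fun N : ℕ => N * log (1 + s / N)) atTop (𝓝 s) := by
    refine tendsto_nat_mul_log_one_add_of_tendsto (tendsto_const_nhds.congr' ?_)
    filter_upwards [eventually_ne_atTop 0] with N hN
    field_simp
  have hlog : Tendsto (fun N : ℕ => log (1 + s / N)) atTop (𝓝 0) := by
    simpa [Function.comp_def] using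
      (continuousAt_clog one_mem_slitPlane).tendsto.comp (tendsto_one_add_div_natCast s)
  have h := hmain.add (hlog.const_mul (s + 1 / 2))
  rw [mul_zero, add_zero] at h
  exact h.congr fun N => by ring

lemma inv_sqrt_two_mul_stirlingSeq {N : ℕ} (hN : N ≠ 0) :
    (√2 * Stirling.stirlingSeq N)⁻¹ = Real.exp ((N + 1 / 2) * Real.log N - N) / N ! := by
  have hN0 : (0 : ℝ) < N := Nat.cast_pos.2 (Nat.pos_of_ne_zero hN)
  have hpow : (N : ℝ) ^ N = Real.exp (N * Real.log N) := by rw [Real.exp_nat_mul, Real.exp_log hN0]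
  have he : Real.exp 1 ^ N = Real.exp N := by rw [← Real.exp_nat_mul, mul_one]
  have hexp : Real.exp ((N + 1 / 2) * Real.log N - N) = √N * (N / Real.exp 1) ^ N := by
    rw [div_pow, hpow, he, Real.sqrt_eq_rpow, Real.rpow_def_of_pos hN0, ← Real.exp_sub,
      ← Real.exp_add]
    ring_nf
  rw [hexp, Stirling.stirlingSeq, Real.sqrt_mul zero_le_two]
  field_simp

lemma tendsto_exp_mul_log_sub_div_factorial :
    Tendsto (fun N : ℕ => Real.exp ((N + 1 / 2) * Real.log N - N) / N !) atTop
      (𝓝 (√(2 * Real.pi))⁻¹) := by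
  rw [Real.sqrt_mul zero_le_two]
  refine ((tendsto_const_nhds.mul Stirling.tendsto_stirlingSeq_sqrt_pi).inv₀
    (by positivity)).congr' ?_
  filter_upwards [eventually_ne_atTop 0] with N hN
  exact inv_sqrt_two_mul_stirlingSeq hN

noncomputable def stirlingRatio (s : ℂ) (N : ℕ) : ℂ :=
  exp ((s + N + 1 / 2) * log (s + N)) * exp (-N) / (N ^ s * N !)

lemma stirlingRatio_eq {s : ℂ} {N : ℕ} (hN : N ≠ 0) (hsN : 1 + s / N ≠ 0) :
    stirlingRatio s N = (Real.exp ((N + 1 / 2) * Real.log N - N) / N ! : ℝ)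
      * exp ((s + N + 1 / 2) * log (1 + s / N)) := by
  have hN' : (N : ℂ) ≠ 0 := Nat.cast_ne_zero.2 hN
  have hlog : log (s + N) = Real.log N + log (1 + s / N) := by
    rw [← log_ofReal_mul (Nat.cast_pos.2 (Nat.pos_of_ne_zero hN)) hsN]
    congr 1
    push_cast
    field_simp
    ring
  have hexp : exp ((s + N + 1 / 2) * log (s + N)) * exp (-N) = N ^ s
      * exp ((N + 1 / 2) * Real.log N - N : ℝ) * exp ((s + N + 1 / 2) * log (1 + s / N)) := by
    rw [cpow_def_of_ne_zero hN', ← natCast_log, ← exp_add, ← exp_add, ← exp_add, hlog]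
    congr 1
    push_cast
    ring
  have hNs : (N : ℂ) ^ s ≠ 0 := by simp [cpow_def_of_ne_zero hN']
  rw [stirlingRatio, hexp, ofReal_div, ofReal_exp]
  push_cast
  field_simp

lemma tendsto_stirlingRatio (s : ℂ) :
    Tendsto (stirlingRatio s) atTop (𝓝 (exp s / √(2 * Real.pi))) := by
  have h := ((continuous_ofReal.tendsto _).comp tendsto_exp_mul_log_sub_div_factorial).mul
    ((continuous_exp.tendsto s).comp (tendsto_add_half_mul_log_one_add_div s))
  rw [ofReal_inv, ← div_eq_inv_mul] at h
  refine h.congr' ?_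
  filter_upwards [eventually_ne_atTop 0,
    (tendsto_one_add_div_natCast s).eventually_ne one_ne_zero] with N hN hsN
  exact (stirlingRatio_eq hN hsN).symm

lemma exp_sum_range_binetIncrement_mul_cpow {s : ℂ} (hs : ∀ n : ℕ, s + n ≠ 0) {N : ℕ}
    (hN : N ≠ 0) :
    exp (∑ n ∈ range N, binetIncrement (s + n)) * s ^ (s - 1 / 2)
      = GammaSeq s N * stirlingRatio s N := by
  have hs0 : s ≠ 0 := by simpa using hs 0
  have hprod : exp (∑ n ∈ range (N + 1), log (s + n)) = ∏ n ∈ range (N + 1), (s + n) := by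
    rw [exp_sum]
    exact prod_congr rfl fun n _ => exp_log (hs n)
  have hprod0 : ∏ n ∈ range (N + 1), (s + n) ≠ 0 := prod_ne_zero_iff.2 fun n _ => hs n
  have hNs : (N : ℂ) ^ s ≠ 0 := by simp [cpow_def_of_ne_zero (Nat.cast_ne_zero.2 hN)]
  have hfac : (N ! : ℂ) ≠ 0 := Nat.cast_ne_zero.2 N.factorial_ne_zero
  rw [sum_range_binetIncrement, cpow_def_of_ne_zero hs0, GammaSeq, stirlingRatio,
    show (s + N + 1 / 2) * log (s + N) - (s - 1 / 2) * log s
        - ∑ n ∈ range (N + 1), log (s + n) - N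
      = (s + N + 1 / 2) * log (s + N) + -N - log s * (s - 1 / 2)
        - ∑ n ∈ range (N + 1), log (s + n) by ring,
    exp_sub, exp_sub, exp_add, hprod]
  field_simp

lemma tendsto_exp_sum_range_binetIncrement {s : ℂ} (hs : ∀ n : ℕ, s + n ≠ 0) :
    Tendsto (fun N => exp (∑ n ∈ range N, binetIncrement (s + n))) atTop
      (𝓝 (Gamma s * (exp s / √(2 * Real.pi)) / s ^ (s - 1 / 2))) := by
  have hs0 : s ^ (s - 1 / 2) ≠ 0 := by simp [cpow_def_of_ne_zero (by simpa using hs 0)]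
  refine (((GammaSeq_tendsto_Gamma s).mul (tendsto_stirlingRatio s)).div_const _).congr' ?_
  filter_upwards [eventually_ne_atTop 0] with N hN
  rw [← exp_sum_range_binetIncrement_mul_cpow hs hN, mul_div_cancel_right₀ _ hs0]

open Complex in
theorem stirling_explicit_general (θ : ℝ) (hθ0 : 0 < θ)
    (s : ℂ) (hs : |s.arg| ≤ Real.pi - θ) :
    ∃ μ : ℂ, ‖μ‖ ≤ 1 / (12 * Real.sin (θ / 2) ^ 2) / ‖s‖ ∧
      Complex.Gamma s =
        (Real.sqrt (2 * Real.pi) : ℂ) * s ^ (s - 1 / 2) * Complex.exp (-s)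
          * Complex.exp μ := by
  rcases eq_or_ne s 0 with rfl | hs0
  · exact ⟨0, by simp, by simp [zero_cpow]⟩
  have hslit := mem_slitPlane_of_abs_arg_le hθ0 hs0 hs
  obtain ⟨hsum, hμ⟩ := summable_and_norm_tsum_le_of_norm_le_sub (fun n => by positivity)
    (norm_binetIncrement_add_natCast_le hθ0 hs0 hs)
  refine ⟨_, by simpa using hμ, ?_⟩
  have hexp := tendsto_nhds_unique ((continuous_exp.tendsto _).comp hsum.hasSum.tendsto_sum_nat)
    (tendsto_exp_sum_range_binetIncrement fun n =>
      slitPlane_ne_zero (by simpa using add_ofReal_mem_slitPlane hslit n.cast_nonneg))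
  have hcpow : s ^ (s - 1 / 2) ≠ 0 := by simp [cpow_def_of_ne_zero hs0]
  rw [hexp, exp_neg]
  generalize s ^ (s - 1 / 2) = c at hcpow ⊢
  field_simp

open Complex in
theorem stirling_explicit (θ : ℝ) (hθ0 : 0 < θ) (hθπ : θ < Real.pi)
    (s : ℂ) (hs : |s.arg| ≤ Real.pi - θ) :
    ∃ μ : ℂ, ‖μ‖ ≤ 1 / (12 * Real.sin (θ / 2) ^ 2) / ‖s‖ ∧
      Complex.Gamma s =
        (Real.sqrt (2 * Real.pi) : ℂ) * s ^ (s - 1 / 2) * Complex.exp (-s)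
          * Complex.exp μ :=
  stirling_explicit_general θ hθ0 s hs
end

section
/- Let η:[0,∞)→ℝ be a decreasing continuous function, continuously differentiable outside a finite set of points, with η(0) = 1 and η(x) = 0 for all x ≥ 1. Then there exists x₀ ∈ (0,1] such that the function η₀ defined by η₀(x) = 1 − x/x₀ for 0 ≤ x ≤ x₀ and η₀(x) = 0 for x > x₀ satisfies ‖η₀''‖₁ ≤ ‖η''‖₁ and ‖η₀‖₂ ≤ ‖η‖₂. -/
/-!
Let `V` be the total variation of `η'` on `(0, ∞)`. Since `η'` vanishes beyond `1`, `|η'| ≤ V`,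
so `η x ≥ 1 - V x` by the mean value inequality (applied between the finitely many corners).
Evaluating at `x = 1` gives `V ≥ 1`, and `η` dominates the tent of width `1 / V`, whose derivative
jumps once, by `V`. If `V = ∞` only the `L²` bound matters, and since `‖tent a‖₂² = a / 3` any
width `a ≤ 3 ‖η‖₂²` works; this is positive because `η` is continuous with `η 0 = 1`.
-/

open Set MeasureTheory

theorem MonotoneOn.eVariationOn_le_of_mapsTo {α : Type*} [LinearOrder α] {f : α → ℝ}
    {s : Set α} {c d : ℝ} (hf : MonotoneOn f s) (h : MapsTo f s (Icc c d)) :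
    eVariationOn f s ≤ ENNReal.ofReal (d - c) := by
  rw [eVariationOn.eq_biSup_inter_Icc]
  simp only [mem_ofPred_eq, iSup_le_iff, and_imp, Prod.forall]
  intro a b ha hb _
  rw [hf.eVariationOn_eq ha hb]
  exact ENNReal.ofReal_le_ofReal (by linarith [(h hb).2, (h ha).1])

theorem abs_le_toReal_eVariationOn_of_eq_zero {α : Type*} [LinearOrder α] {f : α → ℝ}
    {s : Set α} {x y : α} (hx : x ∈ s) (hy : y ∈ s) (hfy : f y = 0)
    (hf : eVariationOn f s ≠ ⊤) : |f x| ≤ (eVariationOn f s).toReal := by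
  have := eVariationOn.edist_le f hx hy
  rw [hfy, edist_dist, Real.dist_eq, sub_zero] at this
  exact ENNReal.ofReal_le_iff_le_toReal hf |>.1 this

theorem le_of_deriv_nonneg_off_finset {g : ℝ → ℝ} {a b : ℝ} (S : Finset ℝ) (hab : a ≤ b)
    (hg : ContinuousOn g (Icc a b))
    (hg' : ∀ x ∈ Ioo a b \ S, DifferentiableAt ℝ g x ∧ 0 ≤ deriv g x) : g a ≤ g b := by
  classical
  induction S using Finset.induction_on generalizing a b with
  | empty =>
    simp only [Finset.coe_empty, sdiff_empty] at hg'
    refine monotoneOn_of_deriv_nonneg (convex_Icc a b) hg ?_ ?_ (left_mem_Icc.2 hab)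
      (right_mem_Icc.2 hab) hab
    · rw [interior_Icc]
      exact fun x hx => (hg' x hx).1.differentiableWithinAt
    · rw [interior_Icc]
      exact fun x hx => (hg' x hx).2
  | insert c S _ ih =>
    by_cases hc : c ∈ Ioo a b
    · calc g a ≤ g c := ih hc.1.le (hg.mono (Icc_subset_Icc_right hc.2.le)) fun x hx =>
            hg' x ⟨⟨hx.1.1, hx.1.2.trans hc.2⟩, by simp [hx.1.2.ne, hx.2]⟩
        _ ≤ g b := ih hc.2.le (hg.mono (Icc_subset_Icc_left hc.1.le)) fun x hx =>
            hg' x ⟨⟨hc.1.trans hx.1.1, hx.1.2⟩, by simp [hx.1.1.ne', hx.2]⟩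
    · exact ih hab hg fun x hx =>
        hg' x ⟨hx.1, by simp [hx.2, show x ≠ c from fun h => hc (h ▸ hx.1)]⟩

theorem sub_mul_le_of_abs_deriv_le_off_finset {f : ℝ → ℝ} {a b r : ℝ} (S : Finset ℝ)
    (hab : a ≤ b) (hf : ContinuousOn f (Icc a b))
    (hd : ∀ x ∈ Ioo a b \ S, DifferentiableAt ℝ f x)
    (hr : ∀ x ∈ Ioo a b \ S, |deriv f x| ≤ r) : f a - r * (b - a) ≤ f b := by
  have hlin (x : ℝ) : HasDerivAt (fun y => r * y) r x := by
    simpa using (hasDerivAt_id x).const_mul r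
  have key : f a + r * a ≤ f b + r * b :=
    le_of_deriv_nonneg_off_finset (g := fun x => f x + r * x) S hab
      (hf.add (continuous_const.mul continuous_id).continuousOn) fun x hx => by
      refine ⟨(hd x hx).add (hlin x).differentiableAt, ?_⟩
      rw [deriv_fun_add (hd x hx) (hlin x).differentiableAt, (hlin x).deriv]
      linarith [neg_abs_le (deriv f x), hr x hx]
  linarith

theorem ContinuousOn.integrableOn_Ioi_of_eq_zero {f : ℝ → ℝ} {a b : ℝ}
    (hf : ContinuousOn f (Icc a b)) (hb : ∀ x, b < x → f x = 0) : IntegrableOn f (Ioi a) :=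
  (hf.integrableOn_Icc.mono_set Ioc_subset_Icc_self).of_forall_sdiff_eq_zero measurableSet_Ioi
    fun x hx => hb x (not_le.1 fun h => hx.2 ⟨hx.1, h⟩)

theorem setIntegral_Ioi_eq_intervalIntegral {f : ℝ → ℝ} {a b : ℝ} (hab : a ≤ b)
    (hb : ∀ x, b < x → f x = 0) : ∫ x in Ioi a, f x = ∫ x in a..b, f x := by
  rw [intervalIntegral.integral_of_le hab]
  exact setIntegral_eq_of_subset_of_forall_sdiff_eq_zero measurableSet_Ioi Ioc_subset_Ioi_self
    fun x hx => hb x (not_le.1 fun h => hx.2 ⟨hx.1, h⟩)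

theorem hasDerivAt_one_sub_div (a x : ℝ) : HasDerivAt (fun y => 1 - y / a) (-a⁻¹) x := by
  simpa [div_eq_mul_inv] using ((hasDerivAt_id x).div_const a).const_sub 1

noncomputable def tent (a x : ℝ) : ℝ := if x ≤ a then 1 - x / a else 0

section Tent

variable {a : ℝ}

theorem tent_of_le {x : ℝ} (hx : x ≤ a) : tent a x = 1 - x / a := if_pos hx

theorem tent_of_lt {x : ℝ} (hx : a < x) : tent a x = 0 := if_neg hx.not_ge

theorem deriv_tent_of_lt {x : ℝ} (hx : x < a) : deriv (tent a) x = -a⁻¹ := by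
  have : tent a =ᶠ[nhds x] fun y => 1 - y / a :=
    (eventually_lt_nhds hx).mono fun y hy => tent_of_le hy.le
  rw [this.deriv_eq, (hasDerivAt_one_sub_div a x).deriv]

theorem deriv_tent_of_gt {x : ℝ} (hx : a < x) : deriv (tent a) x = 0 := by
  have : tent a =ᶠ[nhds x] fun _ => 0 :=
    (eventually_gt_nhds hx).mono fun y hy => tent_of_lt hy
  rw [this.deriv_eq, deriv_const]

/-- Whether `deriv` returns a one-sided slope at the corner or the junk value `0`, it lies between
the two slopes, which is all the variation bound needs. -/
theorem deriv_tent_self_mem_Icc (ha : 0 ≤ a) : deriv (tent a) a ∈ Icc (-a⁻¹) 0 := by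
  by_cases hd : DifferentiableAt ℝ (tent a) a
  · have hleft : HasDerivWithinAt (tent a) (-a⁻¹) (Iic a) a :=
      (hasDerivAt_one_sub_div a a).hasDerivWithinAt.congr (fun y hy => tent_of_le hy)
        (tent_of_le le_rfl)
    rw [(uniqueDiffOn_Iic a a self_mem_Iic).eq_deriv _ hd.hasDerivAt.hasDerivWithinAt hleft]
    exact ⟨le_rfl, neg_nonpos.2 (inv_nonneg.2 ha)⟩
  · rw [deriv_zero_of_not_differentiableAt hd]
    exact ⟨neg_nonpos.2 (inv_nonneg.2 ha), le_rfl⟩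

theorem eVariationOn_deriv_tent_le (ha : 0 ≤ a) (s : Set ℝ) :
    eVariationOn (deriv (tent a)) s ≤ ENNReal.ofReal a⁻¹ := by
  have hmem (x : ℝ) : deriv (tent a) x ∈ Icc (-a⁻¹) 0 := by
    rcases lt_trichotomy x a with hx | rfl | hx
    · simp [deriv_tent_of_lt hx, inv_nonneg.2 ha]
    · exact deriv_tent_self_mem_Icc ha
    · simp [deriv_tent_of_gt hx, inv_nonneg.2 ha]
  have hmono : Monotone (deriv (tent a)) := fun x y hxy => by
    rcases lt_or_ge x a with hx | hx
    · exact (deriv_tent_of_lt hx).symm ▸ (hmem y).1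
    rcases hxy.eq_or_lt with rfl | hxy
    · exact le_rfl
    · exact (deriv_tent_of_gt (hx.trans_lt hxy)).symm ▸ (hmem x).2
  simpa using (hmono.monotoneOn s).eVariationOn_le_of_mapsTo fun x _ => hmem x

theorem integral_tent_sq (ha : 0 < a) : ∫ x in Ioi 0, tent a x ^ 2 = a / 3 := by
  rw [setIntegral_Ioi_eq_intervalIntegral ha.le fun x hx => by simp [tent_of_lt hx],
    intervalIntegral.integral_congr (g := fun x => (1 - x / a) ^ 2)
      fun x hx => by simp [tent_of_le (uIcc_of_le ha.le ▸ hx).2]]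
  have hF (x : ℝ) : HasDerivAt (fun y => -(a / 3) * (1 - y / a) ^ 3) ((1 - x / a) ^ 2) x := by
    refine (((hasDerivAt_one_sub_div a x).fun_pow 3).const_mul (-(a / 3))).congr_deriv ?_
    norm_num
    field_simp
  rw [intervalIntegral.integral_eq_sub_of_hasDerivAt (fun x _ => hF x)
    (by apply Continuous.intervalIntegrable; fun_prop)]
  field_simp
  ring

theorem integral_tent_sq_le {η : ℝ → ℝ} (ha : 0 < a)
    (hη : IntegrableOn (fun x => η x ^ 2) (Ioi 0)) (h : ∀ x ∈ Ioc 0 a, 1 - x / a ≤ η x) :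
    ∫ x in Ioi 0, tent a x ^ 2 ≤ ∫ x in Ioi 0, η x ^ 2 := by
  have htent : ContinuousOn (fun x => tent a x ^ 2) (Icc 0 a) :=
    (show Continuous fun x : ℝ => (1 - x / a) ^ 2 by fun_prop).continuousOn.congr
      fun x hx => by simp [tent_of_le hx.2]
  refine setIntegral_mono_on (htent.integrableOn_Ioi_of_eq_zero fun x hx => by
    simp [tent_of_lt hx]) hη measurableSet_Ioi fun x hx => ?_
  rcases le_or_gt x a with hxa | hxa
  · rw [tent_of_le hxa]
    exact pow_le_pow_left₀ (by rw [sub_nonneg, div_le_one ha]; exact hxa) (h x ⟨hx, hxa⟩) 2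
  · simpa [tent_of_lt hxa] using sq_nonneg (η x)

end Tent

theorem one_sub_mul_le_of_eVariationOn_deriv_ne_top {η : ℝ → ℝ} (S : Finset ℝ)
    (hcont : ContinuousOn η (Ici 0)) (hS : ∀ x ∈ Ioi (0:ℝ) \ (S : Set ℝ), ContDiffAt ℝ 1 η x)
    (h0 : η 0 = 1) (h1 : ∀ x : ℝ, 1 ≤ x → η x = 0)
    (hV : eVariationOn (deriv η) (Ioi 0) ≠ ⊤) {x : ℝ} (hx : 0 ≤ x) :
    1 - (eVariationOn (deriv η) (Ioi 0)).toReal * x ≤ η x := by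
  have hderiv_two : deriv η 2 = 0 := by
    have : η =ᶠ[nhds 2] fun _ => 0 :=
      (eventually_gt_nhds one_lt_two).mono fun y hy => h1 y hy.le
    rw [this.deriv_eq, deriv_const]
  have := sub_mul_le_of_abs_deriv_le_off_finset S hx (hcont.mono Icc_subset_Ici_self)
    (fun y hy => (hS y ⟨hy.1.1, hy.2⟩).differentiableAt one_ne_zero)
    (fun y hy => abs_le_toReal_eVariationOn_of_eq_zero hy.1.1 (mem_Ioi.2 two_pos) hderiv_two hV)
  rwa [h0, sub_zero] at this

theorem tent_function_extremal_general (η : ℝ → ℝ)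
    (hcont : ContinuousOn η (Set.Ici 0))
    (hpiecewise : ∃ S : Finset ℝ, ∀ x ∈ Set.Ioi (0:ℝ) \ (S : Set ℝ), ContDiffAt ℝ 1 η x)
    (h0 : η 0 = 1) (h1 : ∀ x : ℝ, 1 ≤ x → η x = 0) :
    ∃ x₀ ∈ Set.Ioc (0:ℝ) 1,
      eVariationOn (deriv (fun x : ℝ => if x ≤ x₀ then 1 - x / x₀ else 0)) (Set.Ioi 0)
          ≤ eVariationOn (deriv η) (Set.Ioi 0) ∧
      (∫ x in Set.Ioi (0:ℝ), (if x ≤ x₀ then 1 - x / x₀ else 0 : ℝ) ^ 2)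
          ≤ ∫ x in Set.Ioi (0:ℝ), (η x) ^ 2 := by
  show ∃ x₀ ∈ Ioc (0:ℝ) 1, eVariationOn (deriv (tent x₀)) (Ioi 0) ≤ _ ∧
    ∫ x in Ioi 0, tent x₀ x ^ 2 ≤ _
  obtain ⟨S, hS⟩ := hpiecewise
  have hsq : ContinuousOn (fun x => η x ^ 2) (Icc 0 1) := (hcont.mono Icc_subset_Ici_self).pow 2
  have hsq_vanish (x : ℝ) (hx : 1 < x) : η x ^ 2 = 0 := by simp [h1 x hx.le]
  rcases eq_top_or_lt_top (eVariationOn (deriv η) (Ioi 0)) with hV | hV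
  · have hI : 0 < ∫ x in Ioi 0, η x ^ 2 := by
      rw [setIntegral_Ioi_eq_intervalIntegral zero_le_one hsq_vanish]
      exact intervalIntegral.integral_pos zero_lt_one hsq (fun _ _ => sq_nonneg _)
        ⟨0, left_mem_Icc.2 zero_le_one, by simp [h0]⟩
    refine ⟨min 1 (3 * ∫ x in Ioi 0, η x ^ 2), ⟨by positivity, min_le_left _ _⟩, hV ▸ le_top, ?_⟩
    rw [integral_tent_sq (by positivity)]
    linarith [min_le_right 1 (3 * ∫ x in Ioi 0, η x ^ 2)]
  · set r := (eVariationOn (deriv η) (Ioi 0)).toReal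
    have hlow (x : ℝ) (hx : 0 ≤ x) : 1 - r * x ≤ η x :=
      one_sub_mul_le_of_eVariationOn_deriv_ne_top S hcont hS h0 h1 hV.ne hx
    have hr : 1 ≤ r := by linarith [hlow 1 zero_le_one, h1 1 le_rfl]
    refine ⟨r⁻¹, ⟨by positivity, inv_le_one_of_one_le₀ hr⟩, ?_, ?_⟩
    · calc eVariationOn (deriv (tent r⁻¹)) (Ioi 0) ≤ ENNReal.ofReal r⁻¹⁻¹ :=
            eVariationOn_deriv_tent_le (by positivity) _
        _ = eVariationOn (deriv η) (Ioi 0) := by rw [inv_inv, ENNReal.ofReal_toReal hV.ne]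
    · refine integral_tent_sq_le (by positivity) (hsq.integrableOn_Ioi_of_eq_zero hsq_vanish)
        fun x hx => ?_
      simpa [div_inv_eq_mul, mul_comm] using hlow x hx.1.le

/-- Tent functions are extremal: one can replace a decreasing cutoff `η` by a
piecewise-linear tent `η₀` without increasing either the total variation of the
derivative (`‖η''‖₁`) or the `L²` norm. -/
theorem tent_function_extremal (η : ℝ → ℝ)
    (hcont : ContinuousOn η (Set.Ici 0))
    (hanti : AntitoneOn η (Set.Ici 0))
    (hpiecewise : ∃ S : Finset ℝ, ∀ x ∈ Set.Ioi (0:ℝ) \ (S : Set ℝ), ContDiffAt ℝ 1 η x)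
    (h0 : η 0 = 1) (h1 : ∀ x : ℝ, 1 ≤ x → η x = 0) :
    ∃ x₀ ∈ Set.Ioc (0:ℝ) 1,
      eVariationOn (deriv (fun x : ℝ => if x ≤ x₀ then 1 - x / x₀ else 0)) (Set.Ioi 0)
          ≤ eVariationOn (deriv η) (Set.Ioi 0) ∧
      (∫ x in Set.Ioi (0:ℝ), (if x ≤ x₀ then 1 - x / x₀ else 0 : ℝ) ^ 2)
          ≤ ∫ x in Set.Ioi (0:ℝ), (η x) ^ 2 :=
  tent_function_extremal_general η hcont hpiecewise h0 h1
end

section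
/- Let g:[0,∞)→ℝ be continuous, piecewise C¹, with g and g' of bounded total variation, satisfying: ∫_0^∞ g(t)dt = 1; 0 ≤ g ≤ 1; g(t) = 1 for 0 ≤ t ≤ 1−δ and g(t) = 0 for t ≥ 1+δ where 0 < δ ≤ 1/2; and g(1+t) = 1 − g(1−t) for 0 ≤ t ≤ δ. Set h(x) = ⌊1/x⌋ − ∑_{n=1}^∞ g(nx) for x > 0. Then for all x > 0, |h(x)| ≤ 1/2 + (x/16)·∫_0^∞ |g''(t)| dt, where ∫|g''| is the total variation of g'. -/
/-!
Let `V` be the variation of `g'`. For `x ≥ 1` only `g x` survives in the sum, and `g 1 = 1 / 2`.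
If `g x > 1 / 2` for some `x ∈ (1, 1 + δ)`, the symmetry makes `g (2 - x) < 1 / 2`, so by the
mean value theorem `g'` drops below `-2 g(x)`, rises above `2 g(x) - 1` and drops below `-2 g(x)`
again between the flat parts where it vanishes; hence `V ≥ 12 g(x) - 2`, and `g x ≤ 1` gives
`g x ≤ 1 / 2 + V / 16`.

For `x < 1`, write `g' = P - Q` with `P`, `Q` increasing and `P + Q` increasing exactly as the
variation of `g'` (Jordan decomposition). The error of the midpoint rule on a cell of width `x`
is `∫ K g'` for the sawtooth Peano kernel `K`, and for increasing `F` the integral `∫ K F` lies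
between `0` and `-x² / 8` times the increase of `F` over the cell. On the cells
`[(n + 1/2) x, (n + 3/2) x]` these bounds telescope; as `g'` vanishes at both ends, `P` and `Q`
increase by the same amount, at most `V / 2`. So `x ∑ g(nx)` is within `x² V / 16` of
`1 - x / 2`, while `⌊1/x⌋` is within `1 / 2` of `1/x - 1/2`.
-/

open MeasureTheory Set intervalIntegral

theorem integral_sub_mul_const (p q c K : ℝ) :
    ∫ s in p..q, (s - c) * K = K * (((q - c) ^ 2 - (p - c) ^ 2) / 2) := by
  rw [intervalIntegral.integral_mul_const, intervalIntegral.integral_comp_sub_right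
    (fun s => s), integral_id]
  ring

section IntegralSubMul

variable {F : ℝ → ℝ} {p q c r : ℝ}

theorem integral_sub_mul_le (hpq : p ≤ q) (hF : IntervalIntegrable F volume p q)
    (h : ∀ s ∈ Icc p q, (s - c) * F s ≤ (s - c) * F r) :
    ∫ s in p..q, (s - c) * F s ≤ F r * (((q - c) ^ 2 - (p - c) ^ 2) / 2) :=
  (integral_mono_on hpq (hF.continuousOn_mul (by fun_prop)) (by simp) h).trans_eq
    (integral_sub_mul_const p q c (F r))

theorem le_integral_sub_mul (hpq : p ≤ q) (hF : IntervalIntegrable F volume p q)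
    (h : ∀ s ∈ Icc p q, (s - c) * F r ≤ (s - c) * F s) :
    F r * (((q - c) ^ 2 - (p - c) ^ 2) / 2) ≤ ∫ s in p..q, (s - c) * F s :=
  (integral_sub_mul_const p q c (F r)).symm.trans_le
    (integral_mono_on hpq (by simp) (hF.continuousOn_mul (by fun_prop)) h)

end IntegralSubMul

/-- `∫ K F` for the Peano kernel `K` of the midpoint rule on `[a, b]`. -/
noncomputable def midpointPeano (F : ℝ → ℝ) (a b : ℝ) : ℝ :=
  (∫ s in a..(a + b) / 2, (s - a) * F s) + ∫ s in (a + b) / 2..b, (s - b) * F s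

section MidpointRule

variable {F G g P Q : ℝ → ℝ} {S : Set ℝ} {a b h : ℝ}

theorem midpointPeano_sub (hab : a ≤ b) (hF : IntervalIntegrable F volume a b)
    (hG : IntervalIntegrable G volume a b) :
    midpointPeano (F - G) a b = midpointPeano F a b - midpointPeano G a b := by
  have hm : (a + b) / 2 ∈ uIcc a b := by rw [uIcc_of_le hab]; constructor <;> linarith
  have h₁ {H : ℝ → ℝ} (hH : IntervalIntegrable H volume a b) :
      IntervalIntegrable (fun s => (s - a) * H s) volume a ((a + b) / 2) :=
    (hH.mono_set (uIcc_subset_uIcc_left hm)).continuousOn_mul (by fun_prop)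
  have h₂ {H : ℝ → ℝ} (hH : IntervalIntegrable H volume a b) :
      IntervalIntegrable (fun s => (s - b) * H s) volume ((a + b) / 2) b :=
    (hH.mono_set (uIcc_subset_uIcc_right hm)).continuousOn_mul (by fun_prop)
  simp only [midpointPeano, Pi.sub_apply, mul_sub]
  rw [integral_sub (h₁ hF) (h₁ hG), integral_sub (h₂ hF) (h₂ hG)]
  ring

theorem midpointPeano_bounds (hab : a ≤ b) (hF : MonotoneOn F (Icc a b)) :
    (F a - F b) * ((b - a) ^ 2 / 8) ≤ midpointPeano F a b ∧ midpointPeano F a b ≤ 0 := by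
  set m := (a + b) / 2 with hm
  have ham : a ≤ m := by linarith
  have hmb : m ≤ b := by linarith
  have hF₁ : MonotoneOn F (Icc a m) := hF.mono (Icc_subset_Icc_right hmb)
  have hF₂ : MonotoneOn F (Icc m b) := hF.mono (Icc_subset_Icc_left ham)
  have hi₁ : IntervalIntegrable F volume a m := (uIcc_of_le ham ▸ hF₁).intervalIntegrable
  have hi₂ : IntervalIntegrable F volume m b := (uIcc_of_le hmb ▸ hF₂).intervalIntegrable
  have hlo₁ := le_integral_sub_mul (c := a) (r := a) ham hi₁ fun s hs =>
    mul_le_mul_of_nonneg_left (hF₁ ⟨le_rfl, ham⟩ hs hs.1) (by linarith [hs.1])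
  have hup₁ := integral_sub_mul_le (c := a) (r := m) ham hi₁ fun s hs =>
    mul_le_mul_of_nonneg_left (hF₁ hs ⟨ham, le_rfl⟩ hs.2) (by linarith [hs.1])
  have hlo₂ := le_integral_sub_mul (c := b) (r := b) hmb hi₂ fun s hs =>
    mul_le_mul_of_nonpos_left (hF₂ hs ⟨hmb, le_rfl⟩ hs.2) (by linarith [hs.2])
  have hup₂ := integral_sub_mul_le (c := b) (r := m) hmb hi₂ fun s hs =>
    mul_le_mul_of_nonpos_left (hF₂ ⟨le_rfl, hmb⟩ hs hs.1) (by linarith [hs.2])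
  have e₁ : ((m - a) ^ 2 - (a - a) ^ 2) / 2 = (b - a) ^ 2 / 8 := by rw [hm]; ring
  have e₂ : ((b - b) ^ 2 - (m - b) ^ 2) / 2 = -((b - a) ^ 2 / 8) := by rw [hm]; ring
  rw [e₁] at hlo₁ hup₁
  rw [e₂] at hlo₂ hup₂
  unfold midpointPeano
  rw [← hm]
  constructor <;> linarith

theorem integral_add_integral_sub_mul_deriv (hS : S.Countable) (c : ℝ) (hab : a ≤ b)
    (hg : ContinuousOn g (Icc a b)) (hd : ∀ x ∈ Ioo a b \ S, DifferentiableAt ℝ g x)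
    (hg' : IntervalIntegrable (deriv g) volume a b) :
    (∫ s in a..b, g s) + ∫ s in a..b, (s - c) * deriv g s = (b - c) * g b - (a - c) * g a := by
  rw [← integral_add (hg.intervalIntegrable_of_Icc hab)
    (hg'.continuousOn_mul (by fun_prop))]
  refine integral_eq_of_hasDerivAt_off_countable_of_le (fun s => (s - c) * g s) _ hab hS
    ((continuousOn_id.sub continuousOn_const).mul hg) (fun s hs => ?_)
    ((hg.intervalIntegrable_of_Icc hab).add (hg'.continuousOn_mul (by fun_prop)))
  simpa using ((hasDerivAt_id' s).sub_const c).fun_mul (hd s hs).hasDerivAt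

theorem midpoint_error_eq_midpointPeano (hS : S.Countable) (hab : a ≤ b)
    (hg : ContinuousOn g (Icc a b)) (hd : ∀ x ∈ Ioo a b \ S, DifferentiableAt ℝ g x)
    (hg' : IntervalIntegrable (deriv g) volume a b) :
    (b - a) * g ((a + b) / 2) - ∫ s in a..b, g s = midpointPeano (deriv g) a b := by
  set m := (a + b) / 2 with hm
  have ham : a ≤ m := by linarith
  have hmb : m ≤ b := by linarith
  have hm_mem : m ∈ uIcc a b := by rw [uIcc_of_le hab]; exact ⟨ham, hmb⟩
  have h₁ := integral_add_integral_sub_mul_deriv hS a ham (hg.mono (Icc_subset_Icc_right hmb))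
    (fun x hx => hd x ⟨Ioo_subset_Ioo_right hmb hx.1, hx.2⟩)
    (hg'.mono_set (uIcc_subset_uIcc_left hm_mem))
  have h₂ := integral_add_integral_sub_mul_deriv hS b hmb (hg.mono (Icc_subset_Icc_left ham))
    (fun x hx => hd x ⟨Ioo_subset_Ioo_left ham hx.1, hx.2⟩)
    (hg'.mono_set (uIcc_subset_uIcc_right hm_mem))
  have hsplit := integral_add_adjacent_intervals (μ := volume)
    ((hg.mono (Icc_subset_Icc_right hmb)).intervalIntegrable_of_Icc ham)
    ((hg.mono (Icc_subset_Icc_left ham)).intervalIntegrable_of_Icc hmb)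
  unfold midpointPeano
  linarith

theorem midpoint_error_bounds (hS : S.Countable) (hab : a ≤ b)
    (hg : ContinuousOn g (Icc a b)) (hd : ∀ x ∈ Ioo a b \ S, DifferentiableAt ℝ g x)
    (hP : MonotoneOn P (Icc a b)) (hQ : MonotoneOn Q (Icc a b)) (hPQ : deriv g = P - Q) :
    (P a - P b) * ((b - a) ^ 2 / 8) ≤ (b - a) * g ((a + b) / 2) - ∫ s in a..b, g s ∧
      (b - a) * g ((a + b) / 2) - ∫ s in a..b, g s ≤ (Q b - Q a) * ((b - a) ^ 2 / 8) := by
  have hPi : IntervalIntegrable P volume a b := (uIcc_of_le hab ▸ hP).intervalIntegrable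
  have hQi : IntervalIntegrable Q volume a b := (uIcc_of_le hab ▸ hQ).intervalIntegrable
  rw [midpoint_error_eq_midpointPeano hS hab hg hd (hPQ ▸ hPi.sub hQi), hPQ,
    midpointPeano_sub hab hPi hQi]
  obtain ⟨hPlo, hPup⟩ := midpointPeano_bounds hab hP
  obtain ⟨hQlo, hQup⟩ := midpointPeano_bounds hab hQ
  constructor <;> linarith

theorem composite_midpoint_error_bounds (hS : S.Countable) (hh : 0 ≤ h) (N : ℕ)
    (hg : ContinuousOn g (Icc a (a + N * h)))
    (hd : ∀ x ∈ Ioo a (a + N * h) \ S, DifferentiableAt ℝ g x)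
    (hP : MonotoneOn P (Icc a (a + N * h))) (hQ : MonotoneOn Q (Icc a (a + N * h)))
    (hPQ : deriv g = P - Q) :
    (P a - P (a + N * h)) * (h ^ 2 / 8) ≤
        h * ∑ k ∈ Finset.range N, g (a + (k + 1 / 2) * h) - ∫ s in a..a + N * h, g s ∧
      h * ∑ k ∈ Finset.range N, g (a + (k + 1 / 2) * h) - ∫ s in a..a + N * h, g s ≤
        (Q (a + N * h) - Q a) * (h ^ 2 / 8) := by
  induction N with
  | zero => simp
  | succ N ih =>
    set b := a + N * h with hb
    have hab : a ≤ b := le_add_of_nonneg_right (by positivity)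
    have hnext : a + ((N + 1 : ℕ) : ℝ) * h = b + h := by push_cast; ring
    rw [hnext] at hg hd hP hQ ⊢
    have hsub : Icc a b ⊆ Icc a (b + h) := Icc_subset_Icc_right (by linarith)
    have hcell : Icc b (b + h) ⊆ Icc a (b + h) := Icc_subset_Icc_left hab
    obtain ⟨ihlo, ihup⟩ := ih (hg.mono hsub)
      (fun x hx => hd x ⟨Ioo_subset_Ioo_right (by linarith) hx.1, hx.2⟩)
      (hP.mono hsub) (hQ.mono hsub)
    obtain ⟨lo, up⟩ := midpoint_error_bounds hS (by linarith) (hg.mono hcell)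
      (fun x hx => hd x ⟨Ioo_subset_Ioo_left hab hx.1, hx.2⟩) (hP.mono hcell) (hQ.mono hcell) hPQ
    have hmid : (b + (b + h)) / 2 = a + (N + 1 / 2) * h := by rw [hb]; ring
    rw [hmid, add_sub_cancel_left] at lo up
    have hsplit := integral_add_adjacent_intervals (μ := volume)
      ((hg.mono hsub).intervalIntegrable_of_Icc hab)
      ((hg.mono hcell).intervalIntegrable_of_Icc (by linarith))
    rw [Finset.sum_range_succ, ← hsplit]
    constructor <;> linarith

end MidpointRule

section Slope

variable {g : ℝ → ℝ} {S : Set ℝ} {c d : ℝ}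

theorem setAverage_Ioo_deriv (hS : S.Countable) (hcd : c < d) (hg : ContinuousOn g (Icc c d))
    (hd : ∀ x ∈ Ioo c d \ S, DifferentiableAt ℝ g x)
    (hg' : IntervalIntegrable (deriv g) volume c d) :
    ⨍ x in Ioo c d, deriv g x = (g d - g c) / (d - c) := by
  rw [setAverage_eq, ← integral_Ioc_eq_integral_Ioo, ← intervalIntegral.integral_of_le hcd.le,
    integral_eq_of_hasDerivAt_off_countable_of_le g (deriv g) hcd.le hS hg
      (fun x hx => (hd x hx).hasDerivAt) hg', Real.volume_real_Ioo_of_le hcd.le, smul_eq_mul,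
    div_eq_inv_mul]

theorem exists_deriv_le_slope (hS : S.Countable) (hcd : c < d) (hg : ContinuousOn g (Icc c d))
    (hd : ∀ x ∈ Ioo c d \ S, DifferentiableAt ℝ g x)
    (hg' : IntervalIntegrable (deriv g) volume c d) :
    ∃ p ∈ Ioo c d, deriv g p ≤ (g d - g c) / (d - c) := by
  rw [← setAverage_Ioo_deriv hS hcd hg hd hg']
  refine exists_le_setAverage ?_ measure_Ioo_lt_top.ne ?_
  · simpa using hcd
  · exact (intervalIntegrable_iff_integrableOn_Ioo_of_le hcd.le).1 hg'

theorem exists_slope_le_deriv (hS : S.Countable) (hcd : c < d) (hg : ContinuousOn g (Icc c d))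
    (hd : ∀ x ∈ Ioo c d \ S, DifferentiableAt ℝ g x)
    (hg' : IntervalIntegrable (deriv g) volume c d) :
    ∃ p ∈ Ioo c d, (g d - g c) / (d - c) ≤ deriv g p := by
  rw [← setAverage_Ioo_deriv hS hcd hg hd hg']
  refine exists_setAverage_le ?_ measure_Ioo_lt_top.ne ?_
  · simpa using hcd
  · exact (intervalIntegrable_iff_integrableOn_Ioo_of_le hcd.le).1 hg'

end Slope

theorem abs_sub_le_of_eq_sub_monotoneOn {α : Type*} [Preorder α] {f P Q : α → ℝ} {s : Set α}
    (hP : MonotoneOn P s) (hQ : MonotoneOn Q s) (hf : f = P - Q) {p q : α} (hp : p ∈ s)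
    (hq : q ∈ s) (hpq : p ≤ q) : |f q - f p| ≤ (P q - P p) + (Q q - Q p) := by
  have := hP hp hq hpq
  have := hQ hp hq hpq
  rw [hf, abs_le]
  simp only [Pi.sub_apply]
  constructor <;> linarith

theorem variationOnFromTo_le_toReal_eVariationOn {α E : Type*} [LinearOrder α]
    [PseudoEMetricSpace E] {f : α → E} {s : Set α} (hf : BoundedVariationOn f s) {a b : α}
    (hab : a ≤ b) : variationOnFromTo f s a b ≤ (eVariationOn f s).toReal := by
  rw [variationOnFromTo.eq_of_le _ _ hab]
  exact ENNReal.toReal_mono hf (eVariationOn.mono _ inter_subset_left)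

theorem deriv_eq_zero_of_eqOn_const {g : ℝ → ℝ} {U : Set ℝ} {c x : ℝ} (hU : IsOpen U)
    (hg : EqOn g (fun _ => c) U) (hx : x ∈ U) : deriv g x = 0 :=
  (hg.deriv hU hx).trans (deriv_const x c)

theorem tsum_eq_sum_range_of_eq_zero {g : ℝ → ℝ} {x T : ℝ} {N : ℕ} (hx : 0 ≤ x)
    (hN : T ≤ (N + 1) * x) (hg : ∀ t, T ≤ t → g t = 0) :
    ∑' n : ℕ, g ((n + 1) * x) = ∑ n ∈ Finset.range N, g ((n + 1) * x) := by
  refine tsum_eq_sum fun n hn => hg _ (hN.trans ?_)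
  have : (N : ℝ) ≤ n := by exact_mod_cast not_lt.1 (Finset.mem_range.not.1 hn)
  gcongr

theorem abs_floor_one_div_sub_le {x E C : ℝ} (hx : 0 < x)
    (h : |x * E - (1 - x / 2)| ≤ x ^ 2 * C) : |(⌊1 / x⌋ : ℝ) - E| ≤ 1 / 2 + x * C := by
  have hfloor_le : (⌊1 / x⌋ : ℝ) ≤ 1 / x := Int.floor_le _
  have hlt_floor : 1 / x - 1 < ⌊1 / x⌋ := Int.sub_one_lt_floor _
  have hE : |E - (1 / x - 1 / 2)| ≤ x * C := by
    have hdiv : E - (1 / x - 1 / 2) = (x * E - (1 - x / 2)) / x := by field_simp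
    rw [hdiv, abs_div, abs_of_pos hx, div_le_iff₀ hx]
    exact h.trans_eq (by ring)
  rw [abs_le] at hE ⊢
  constructor <;> linarith

theorem two_mul_le_div_of_le_half {y ℓ : ℝ} (hy : 0 ≤ y) (hℓ : 0 < ℓ) (hℓ' : ℓ ≤ 1 / 2) :
    2 * y ≤ y / ℓ := by
  rw [le_div_iff₀ hℓ]
  nlinarith

section SmoothingProfile

variable {g P Q : ℝ → ℝ} {S : Set ℝ} {δ V a b x : ℝ}

theorem apply_one_eq_half (hδ0 : 0 ≤ δ)
    (hsym : ∀ t : ℝ, 0 ≤ t → t ≤ δ → g (1 + t) = 1 - g (1 - t)) : g 1 = 1 / 2 := by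
  have := hsym 0 le_rfl hδ0
  norm_num at this
  linarith

theorem integral_eq_one_sub_of_le_of_le (hcont : ContinuousOn g (Ici 0))
    (hint : ∫ t in Ioi (0 : ℝ), g t = 1) (hone : ∀ t : ℝ, 0 ≤ t → t ≤ 1 - δ → g t = 1)
    (hzero : ∀ t : ℝ, 1 + δ ≤ t → g t = 0) (ha : 0 ≤ a) (ha' : a ≤ 1 - δ) (hb : 1 + δ ≤ b)
    (hab : a ≤ b) : ∫ s in a..b, g s = 1 - a := by
  have hgi : ∀ c d : ℝ, 0 ≤ c → c ≤ d → IntervalIntegrable g volume c d := fun c d hc hcd =>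
    (hcont.mono fun t ht => hc.trans ht.1).intervalIntegrable_of_Icc hcd
  have htail : EqOn g 0 (Ioi b) := fun t ht => hzero t (hb.trans (le_of_lt ht))
  have hwhole : ∫ s in (0 : ℝ)..b, g s = 1 := by
    rw [← hint, ← integral_interval_add_Ioi' (hgi 0 b le_rfl (ha.trans hab))
      (integrableOn_zero.congr_fun htail.symm measurableSet_Ioi),
      setIntegral_eq_zero_of_forall_eq_zero htail, add_zero]
  have hhead : ∫ s in (0 : ℝ)..a, g s = a := by
    rw [integral_congr (g := fun _ => (1 : ℝ)) fun t ht => ?_]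
    · simp
    rw [uIcc_of_le ha] at ht
    exact hone t ht.1 (ht.2.trans ha')
  rw [← integral_interval_sub_left (hgi 0 b le_rfl (ha.trans hab)) (hgi 0 a le_rfl ha),
    hwhole, hhead]

theorem abs_mul_tsum_sub_le_of_lt_one (hS : S.Countable) (hcont : ContinuousOn g (Ici 0))
    (hd : ∀ y ∈ Ioi (0 : ℝ) \ S, DifferentiableAt ℝ g y)
    (hP : MonotoneOn P (Ici 0)) (hQ : MonotoneOn Q (Ici 0)) (hPQ : deriv g = P - Q)
    (hV : ∀ p q : ℝ, 0 ≤ p → p ≤ q → P q - P p + (Q q - Q p) ≤ V) (hδ : δ ≤ 1 / 2)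
    (hint : ∫ t in Ioi (0 : ℝ), g t = 1) (hone : ∀ t : ℝ, 0 ≤ t → t ≤ 1 - δ → g t = 1)
    (hzero : ∀ t : ℝ, 1 + δ ≤ t → g t = 0) (hx : 0 < x) (hx1 : x < 1) :
    |x * ∑' n : ℕ, g ((n + 1) * x) - (1 - x / 2)| ≤ x ^ 2 * (V / 16) := by
  set N := ⌈(1 + δ) / x⌉₊
  have hN : 1 + δ ≤ N * x := (div_le_iff₀ hx).1 (Nat.le_ceil _)
  set b := x / 2 + N * x with hb
  have hcells := composite_midpoint_error_bounds hS hx.le N (a := x / 2)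
    (hcont.mono fun t ht => (by positivity : (0 : ℝ) ≤ x / 2).trans ht.1)
    (fun y hy => hd y ⟨(by positivity : (0 : ℝ) < x / 2).trans hy.1.1, hy.2⟩)
    (hP.mono fun t ht => (by positivity : (0 : ℝ) ≤ x / 2).trans ht.1)
    (hQ.mono fun t ht => (by positivity : (0 : ℝ) ≤ x / 2).trans ht.1) hPQ
  have hsum : ∑ k ∈ Finset.range N, g (x / 2 + (k + 1 / 2) * x) =
      ∑' n : ℕ, g ((n + 1) * x) := by
    rw [tsum_eq_sum_range_of_eq_zero hx.le (by nlinarith) hzero]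
    exact Finset.sum_congr rfl fun k _ => by ring_nf
  have hxb : x / 2 ≤ b := le_add_of_nonneg_right (by positivity)
  rw [hsum, ← hb, integral_eq_one_sub_of_le_of_le hcont hint hone hzero (by positivity)
    (by linarith) (by linarith) hxb] at hcells
  have hflat₀ : deriv g (x / 2) = 0 :=
    deriv_eq_zero_of_eqOn_const (c := 1) isOpen_Ioo (fun t ht => hone t ht.1.le ht.2.le)
      (⟨by positivity, by linarith⟩ : x / 2 ∈ Ioo 0 (1 - δ))
  have hflat₁ : deriv g b = 0 :=
    deriv_eq_zero_of_eqOn_const (c := 0) isOpen_Ioi (fun t ht => hzero t (le_of_lt ht))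
      (by show 1 + δ < b; linarith)
  -- `deriv g = P - Q` vanishes at both ends, so `P` and `Q` increase equally, by at most `V / 2`.
  have hbal : P b - P (x / 2) = Q b - Q (x / 2) := by
    have := congrFun hPQ (x / 2)
    have := congrFun hPQ b
    simp only [Pi.sub_apply] at *
    linarith
  have hinc := hV (x / 2) b (by positivity) hxb
  have hx2 : 0 ≤ x ^ 2 / 8 := by positivity
  obtain ⟨hlo, hup⟩ := hcells
  rw [abs_le]
  constructor <;> nlinarith

theorem exists_steep_derivs_of_one_lt (hS : S.Countable) (hcont : ContinuousOn g (Ici 0))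
    (hd : ∀ y ∈ Ioi (0 : ℝ) \ S, DifferentiableAt ℝ g y)
    (hg' : ∀ c d : ℝ, 0 ≤ c → c ≤ d → IntervalIntegrable (deriv g) volume c d)
    (hδ0 : 0 < δ) (hδ : δ ≤ 1 / 2) (hone : ∀ t : ℝ, 0 ≤ t → t ≤ 1 - δ → g t = 1)
    (hzero : ∀ t : ℝ, 1 + δ ≤ t → g t = 0)
    (hsym : ∀ t : ℝ, 0 ≤ t → t ≤ δ → g (1 + t) = 1 - g (1 - t))
    (hx : 1 < x) (hgx : 1 / 2 < g x) :
    ∃ p₁ p₂ p₃ : ℝ, 1 - δ < p₁ ∧ p₁ < p₂ ∧ p₂ < p₃ ∧ p₃ < 1 + δ ∧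
      deriv g p₁ ≤ -(2 * g x) ∧ 2 * (g x - 1 / 2) ≤ deriv g p₂ ∧ deriv g p₃ ≤ -(2 * g x) := by
  have hxδ : x < 1 + δ := by
    by_contra! h
    linarith [hzero x h]
  set t := x - 1
  have hg1 := apply_one_eq_half hδ0.le hsym
  have hgt : g (1 - t) = 1 - g x := by
    have := hsym t (by linarith) (by linarith)
    rw [show 1 + t = x by ring] at this
    linarith
  have hslope : ∀ c d : ℝ, 0 < c → c < d →
      (∃ p ∈ Ioo c d, deriv g p ≤ (g d - g c) / (d - c)) ∧
        ∃ p ∈ Ioo c d, (g d - g c) / (d - c) ≤ deriv g p := fun c d hc hcd =>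
    have hcont' := hcont.mono fun y hy => hc.le.trans hy.1
    have hd' : ∀ y ∈ Ioo c d \ S, DifferentiableAt ℝ g y := fun y hy =>
      hd y ⟨hc.trans hy.1.1, hy.2⟩
    ⟨exists_deriv_le_slope hS hcd hcont' hd' (hg' c d hc.le hcd.le),
      exists_slope_le_deriv hS hcd hcont' hd' (hg' c d hc.le hcd.le)⟩
  obtain ⟨p₁, hp₁, e₁⟩ := (hslope (1 - δ) (1 - t) (by linarith) (by linarith)).1
  obtain ⟨p₂, hp₂, e₂⟩ := (hslope (1 - t) 1 (by linarith) (by linarith)).2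
  obtain ⟨p₃, hp₃, e₃⟩ := (hslope x (1 + δ) (by linarith) hxδ).1
  rw [hgt, hone (1 - δ) (by linarith) le_rfl, show 1 - t - (1 - δ) = δ - t by ring,
    show 1 - g x - 1 = -g x by ring, neg_div] at e₁
  rw [hg1, hgt, show 1 - (1 - t) = t by ring, show 1 / 2 - (1 - g x) = g x - 1 / 2 by ring] at e₂
  rw [hzero _ le_rfl, show 1 + δ - x = δ - t by ring, zero_sub, neg_div] at e₃
  refine ⟨p₁, p₂, p₃, hp₁.1, hp₁.2.trans hp₂.1, hp₂.2.trans (hx.trans hp₃.1), hp₃.2, ?_, ?_, ?_⟩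
  · linarith [two_mul_le_div_of_le_half (by linarith : 0 ≤ g x) (by linarith : 0 < δ - t)
      (by linarith : δ - t ≤ 1 / 2)]
  · linarith [two_mul_le_div_of_le_half (by linarith : 0 ≤ g x - 1 / 2) (by linarith : 0 < t)
      (by linarith : t ≤ 1 / 2)]
  · linarith [two_mul_le_div_of_le_half (by linarith : 0 ≤ g x) (by linarith : 0 < δ - t)
      (by linarith : δ - t ≤ 1 / 2)]

theorem le_half_add_of_one_lt (hS : S.Countable) (hcont : ContinuousOn g (Ici 0))
    (hd : ∀ y ∈ Ioi (0 : ℝ) \ S, DifferentiableAt ℝ g y)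
    (hP : MonotoneOn P (Ici 0)) (hQ : MonotoneOn Q (Ici 0)) (hPQ : deriv g = P - Q)
    (hV : ∀ p q : ℝ, 0 ≤ p → p ≤ q → P q - P p + (Q q - Q p) ≤ V)
    (hδ0 : 0 < δ) (hδ : δ ≤ 1 / 2) (hone : ∀ t : ℝ, 0 ≤ t → t ≤ 1 - δ → g t = 1)
    (hzero : ∀ t : ℝ, 1 + δ ≤ t → g t = 0)
    (hsym : ∀ t : ℝ, 0 ≤ t → t ≤ δ → g (1 + t) = 1 - g (1 - t))
    (hx : 1 < x) (hgx1 : g x ≤ 1) : g x ≤ 1 / 2 + V / 16 := by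
  have hV0 : 0 ≤ V := by simpa using hV 0 0 le_rfl le_rfl
  rcases le_or_gt (g x) (1 / 2) with hgx | hgx
  · linarith
  have hg' : ∀ c d : ℝ, 0 ≤ c → c ≤ d → IntervalIntegrable (deriv g) volume c d :=
    fun c d hc hcd => by
      have hsub : uIcc c d ⊆ Ici 0 := fun y hy => hc.trans ((uIcc_of_le hcd ▸ hy).1)
      rw [hPQ]
      exact (hP.mono hsub).intervalIntegrable.sub (hQ.mono hsub).intervalIntegrable
  obtain ⟨p₁, p₂, p₃, h₁, h₁₂, h₂₃, h₃, e₁, e₂, e₃⟩ :=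
    exists_steep_derivs_of_one_lt hS hcont hd hg' hδ0 hδ hone hzero hsym hx hgx
  have e₀ : deriv g ((1 - δ) / 2) = 0 :=
    deriv_eq_zero_of_eqOn_const (c := 1) isOpen_Ioo (fun t ht => hone t ht.1.le ht.2.le)
      (⟨by linarith, by linarith⟩ : (1 - δ) / 2 ∈ Ioo 0 (1 - δ))
  have e₄ : deriv g 2 = 0 :=
    deriv_eq_zero_of_eqOn_const (c := 0) isOpen_Ioi (fun t ht => hzero t (le_of_lt ht))
      (show 1 + δ < 2 by linarith)
  have step : ∀ p q : ℝ, 0 ≤ p → p ≤ q → |deriv g q - deriv g p| ≤ P q - P p + (Q q - Q p) :=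
    fun p q hp hpq => abs_sub_le_of_eq_sub_monotoneOn hP hQ hPQ hp (hp.trans hpq) hpq
  have s₁ := step ((1 - δ) / 2) p₁ (by linarith) (by linarith)
  have s₂ := step p₁ p₂ (by linarith) h₁₂.le
  have s₃ := step p₂ p₃ (by linarith) h₂₃.le
  have s₄ := step p₃ 2 (by linarith) (by linarith)
  have htotal := hV ((1 - δ) / 2) 2 (by linarith) (by linarith)
  rw [e₀, sub_zero] at s₁
  rw [e₄, zero_sub, abs_neg] at s₄
  linarith [neg_le_abs (deriv g p₁), le_abs_self (deriv g p₂ - deriv g p₁),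
    neg_le_abs (deriv g p₃ - deriv g p₂), neg_le_abs (deriv g p₃)]

end SmoothingProfile

theorem smoothing_error_bound_general (g : ℝ → ℝ) (δ : ℝ) (hδ0 : 0 < δ) (hδ : δ ≤ 1 / 2)
    (hcont : ContinuousOn g (Set.Ici 0))
    (hpiecewise : ∃ S : Finset ℝ, ∀ x ∈ Set.Ioi (0:ℝ) \ (S : Set ℝ), DifferentiableAt ℝ g x)
    (hg'BV : eVariationOn (deriv g) (Set.Ici 0) ≠ ⊤)
    (hint : (∫ t in Set.Ioi (0:ℝ), g t) = 1)
    (hrange : ∀ t : ℝ, 0 ≤ t → 0 ≤ g t ∧ g t ≤ 1)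
    (hone : ∀ t : ℝ, 0 ≤ t → t ≤ 1 - δ → g t = 1)
    (hzero : ∀ t : ℝ, 1 + δ ≤ t → g t = 0)
    (hsym : ∀ t : ℝ, 0 ≤ t → t ≤ δ → g (1 + t) = 1 - g (1 - t)) :
    ∀ x : ℝ, 0 < x →
      |(⌊1 / x⌋ : ℝ) - ∑' n : ℕ, g ((n + 1) * x)| ≤
        1 / 2 + x / 16 * (eVariationOn (deriv g) (Set.Ici 0)).toReal := by
  obtain ⟨S, hd⟩ := hpiecewise
  obtain ⟨P, Q, hP, hQ, hPQ, hvar⟩ :=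
    (BoundedVariationOn.locallyBoundedVariationOn hg'BV).exists_monotoneOn_sub_monotoneOn'
  set V := (eVariationOn (deriv g) (Ici 0)).toReal
  have hV : ∀ p q : ℝ, 0 ≤ p → p ≤ q → P q - P p + (Q q - Q p) ≤ V := fun p q hp hpq =>
    (hvar p hp q (hp.trans hpq)).trans_le (variationOnFromTo_le_toReal_eVariationOn hg'BV hpq)
  intro x hx
  rcases lt_or_ge x 1 with hx1 | hx1
  · exact (abs_floor_one_div_sub_le hx (abs_mul_tsum_sub_le_of_lt_one S.countable_toSet hcont
      hd hP hQ hPQ hV hδ hint hone hzero hx hx1)).trans_eq (by ring)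
  rw [tsum_eq_sum_range_of_eq_zero (N := 1) hx.le (by push_cast; linarith) hzero,
    Finset.sum_range_one, Nat.cast_zero, zero_add, one_mul]
  have hV0 : 0 ≤ V := ENNReal.toReal_nonneg
  rcases hx1.eq_or_lt with rfl | hx1
  · rw [div_one, Int.floor_one, Int.cast_one, apply_one_eq_half hδ0.le hsym, abs_le]
    constructor <;> linarith
  · have hfloor : ⌊1 / x⌋ = 0 := Int.floor_eq_zero_iff.2 ⟨by positivity, (div_lt_one hx).2 hx1⟩
    rw [hfloor, Int.cast_zero, zero_sub, abs_neg, abs_of_nonneg (hrange x hx.le).1]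
    have := le_half_add_of_one_lt S.countable_toSet hcont hd hP hQ hPQ hV hδ0 hδ hone hzero hsym
      hx1 (hrange x hx.le).2
    nlinarith

/-- The smoothing error `h(x) = ⌊1/x⌋ − ∑ g(nx)` is bounded by
`1/2 + (x/16)·‖g''‖₁`, where `‖g''‖₁` is the total variation of `g'`. -/
theorem smoothing_error_bound (g : ℝ → ℝ) (δ : ℝ) (hδ0 : 0 < δ) (hδ : δ ≤ 1 / 2)
    (hcont : ContinuousOn g (Set.Ici 0))
    (hpiecewise : ∃ S : Finset ℝ, ∀ x ∈ Set.Ioi (0:ℝ) \ (S : Set ℝ), DifferentiableAt ℝ g x)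
    (hgBV : eVariationOn g (Set.Ici 0) ≠ ⊤)
    (hg'BV : eVariationOn (deriv g) (Set.Ici 0) ≠ ⊤)
    (hint : (∫ t in Set.Ioi (0:ℝ), g t) = 1)
    (hrange : ∀ t : ℝ, 0 ≤ t → 0 ≤ g t ∧ g t ≤ 1)
    (hone : ∀ t : ℝ, 0 ≤ t → t ≤ 1 - δ → g t = 1)
    (hzero : ∀ t : ℝ, 1 + δ ≤ t → g t = 0)
    (hsym : ∀ t : ℝ, 0 ≤ t → t ≤ δ → g (1 + t) = 1 - g (1 - t)) :
    ∀ x : ℝ, 0 < x →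
      |(⌊1 / x⌋ : ℝ) - ∑' n : ℕ, g ((n + 1) * x)| ≤
        1 / 2 + x / 16 * (eVariationOn (deriv g) (Set.Ici 0)).toReal :=
  smoothing_error_bound_general g δ hδ0 hδ hcont hpiecewise hg'BV hint hrange hone hzero hsym
end
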